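/- arXiv:0911.1333 — 5 statements merged into one kernel-verified Lean document; each statement's English description precedes it below -/
import Mathlib

section
/- Let H be a polarizer in ℝ^N with reflection x ↦ x_H. For any two measurable functions u, v : ℝ^N → ℝ and any x ∈ ℝ^N, the pair (u^H(x), u^H(x_H)) is a rearrangement of the pair (u(x), u(x_H)), and consequently |u^H(x) − v^H(x)| + |u^H(x_H) − v^H(x_H)| ≤ |u(x) − v(x)| + |u(x_H) − v(x_H)| for nonnegative u, v. In particular, for nonnegative u, v ∈ L^p(ℝ^N) with 1 ≤ p < ∞, one has ‖u^H − v^H‖_{L^p} ≤ ‖u − v‖_{L^p}. -/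
/-!
On each pair `{x, x_H}` polarization replaces `(w x, w x_H)` by `(max, min)` or by `(min, max)`,
and which of the two happens depends on `x` but not on `w`. For convex `φ`,
`φ (max a b - max c d) + φ (min a b - min c d) ≤ φ (a - c) + φ (b - d)`: if the pairs are
ordered the same way this is an equality, and otherwise the two arguments on the left lie between
the two on the right and have the same sum. Taking `φ = |·|` and `φ = |·| ^ p` gives the pointwise
inequalities; since `x ↦ x_H` preserves Lebesgue measure, integrating the `p`-th power version
over `x` counts every point twice on each side.
-/

open MeasureTheory
open scoped ENNReal

noncomputable def reflectH {N : ℕ} (α : EuclideanSpace ℝ (Fin N)) (β : ℝ)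
    (x : EuclideanSpace ℝ (Fin N)) : EuclideanSpace ℝ (Fin N) :=
  x - (2 * ((inner ℝ x α : ℝ) - β)) • α

noncomputable def polarize {N : ℕ} (α : EuclideanSpace ℝ (Fin N)) (β : ℝ)
    (u : EuclideanSpace ℝ (Fin N) → ℝ) (x : EuclideanSpace ℝ (Fin N)) : ℝ :=
  if (inner ℝ x α : ℝ) ≤ β then max (u x) (u (reflectH α β x))
  else min (u x) (u (reflectH α β x))

open Set

theorem ConvexOn.map_add_map_le_of_add_eq {φ : ℝ → ℝ} {s : Set ℝ} (hφ : ConvexOn ℝ s φ)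
    {p q x y : ℝ} (hp : p ∈ s) (hq : q ∈ s) (hpx : p ≤ x) (hxq : x ≤ q) (hsum : x + y = p + q) :
    φ x + φ y ≤ φ p + φ q := by
  rcases hpx.eq_or_lt with rfl | hpx
  · obtain rfl : y = q := by linarith
    exact le_rfl
  have hpq : 0 < q - p := by linarith
  set a := (q - x) / (q - p)
  set b := (x - p) / (q - p)
  have ha : 0 ≤ a := div_nonneg (by linarith) hpq.le
  have hb : 0 ≤ b := div_nonneg (by linarith) hpq.le
  have hab : a + b = 1 := by simp only [a, b]; field_simp; ring
  have hx : a • p + b • q = x := by simp only [a, b, smul_eq_mul]; field_simp; ring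
  have hy : b • p + a • q = y := by
    rw [eq_sub_of_add_eq' hsum]; simp only [a, b, smul_eq_mul]; field_simp; ring
  have h₁ := hφ.2 hp hq ha hb hab
  have h₂ := hφ.2 hp hq hb ha (by linarith)
  rw [hx] at h₁
  rw [hy] at h₂
  simp only [smul_eq_mul] at h₁ h₂
  linear_combination h₁ + h₂ + (φ p + φ q) * hab

theorem ConvexOn.map_max_sub_max_add_map_min_sub_min_le {φ : ℝ → ℝ} (hφ : ConvexOn ℝ univ φ)
    (a b c d : ℝ) :
    φ (max a b - max c d) + φ (min a b - min c d) ≤ φ (a - c) + φ (b - d) := by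
  wlog hab : a ≤ b generalizing a b c d
  · simpa only [max_comm, min_comm, add_comm] using this b a d c (by linarith)
  rcases le_total c d with hcd | hdc
  · rw [max_eq_right hab, min_eq_left hab, max_eq_right hcd, min_eq_left hcd, add_comm]
  · rw [max_eq_right hab, min_eq_left hab, max_eq_left hdc, min_eq_right hdc]
    exact hφ.map_add_map_le_of_add_eq trivial trivial (by linarith) (by linarith) (by ring)

theorem convexOn_univ_norm_rpow {E : Type*} [NormedAddCommGroup E] [NormedSpace ℝ E] {r : ℝ}
    (hr : 1 ≤ r) : ConvexOn ℝ univ fun x : E => ‖x‖ ^ r := by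
  refine ⟨convex_univ, fun x _ y _ a b ha hb hab => ?_⟩
  calc ‖a • x + b • y‖ ^ r ≤ (a • ‖x‖ + b • ‖y‖) ^ r := by
        gcongr
        simpa only [smul_eq_mul] using convexOn_univ_norm.2 trivial trivial ha hb hab
    _ ≤ a • ‖x‖ ^ r + b • ‖y‖ ^ r :=
        (convexOn_rpow hr).2 (norm_nonneg x) (norm_nonneg y) ha hb hab

section Polarization

variable {N : ℕ} {α : EuclideanSpace ℝ (Fin N)} {β : ℝ}

theorem inner_reflectH_left (hα : ‖α‖ = 1) (x : EuclideanSpace ℝ (Fin N)) :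
    inner ℝ (reflectH α β x) α = 2 * β - inner ℝ x α := by
  rw [reflectH, inner_sub_left, real_inner_smul_left, real_inner_self_eq_norm_sq, hα]
  ring

theorem reflectH_reflectH (hα : ‖α‖ = 1) (x : EuclideanSpace ℝ (Fin N)) :
    reflectH α β (reflectH α β x) = x := by
  rw [reflectH, inner_reflectH_left hα, reflectH, sub_sub, ← add_smul]
  ring_nf
  rw [zero_smul, sub_zero]

theorem reflectH_eq_self_of_inner_eq (x : EuclideanSpace ℝ (Fin N)) (h : inner ℝ x α = β) :
    reflectH α β x = x := by
  simp [reflectH, h]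

theorem reflectH_eq_reflection_add (hα : ‖α‖ = 1) (x : EuclideanSpace ℝ (Fin N)) :
    reflectH α β x = (ℝ ∙ α)ᗮ.reflection x + (2 * β) • α := by
  rw [Submodule.reflection_apply, Submodule.starProjection_orthogonal_val,
    Submodule.starProjection_unit_singleton ℝ hα, reflectH, real_inner_comm]
  module

theorem measurePreserving_reflectH (hα : ‖α‖ = 1) :
    MeasurePreserving (reflectH α β) volume volume := by
  have : reflectH α β = (· + (2 * β) • α) ∘ (ℝ ∙ α)ᗮ.reflection :=
    funext (reflectH_eq_reflection_add hα)
  rw [this]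
  exact (measurePreserving_add_right volume _).comp (ℝ ∙ α)ᗮ.reflection.measurePreserving

theorem measurable_polarize {u : EuclideanSpace ℝ (Fin N) → ℝ} (hu : Measurable u) :
    Measurable (polarize α β u) := by
  have hH : Measurable (reflectH α β) := by unfold reflectH; fun_prop
  exact Measurable.ite (measurableSet_le (by fun_prop) measurable_const)
    (hu.max (hu.comp hH)) (hu.min (hu.comp hH))

theorem polarize_pair_eq_max_min_or_min_max (hα : ‖α‖ = 1) (x : EuclideanSpace ℝ (Fin N)) :
    (∀ w, polarize α β w x = max (w x) (w (reflectH α β x)) ∧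
        polarize α β w (reflectH α β x) = min (w x) (w (reflectH α β x))) ∨
    (∀ w, polarize α β w x = min (w x) (w (reflectH α β x)) ∧
        polarize α β w (reflectH α β x) = max (w x) (w (reflectH α β x))) := by
  have hinner := inner_reflectH_left (β := β) hα x
  by_cases hx : inner ℝ x α ≤ β
  · left
    intro w
    refine ⟨if_pos hx, ?_⟩
    by_cases hy : inner ℝ (reflectH α β x) α ≤ β
    · have hxβ : inner ℝ x α = β := by linarith
      simp only [polarize, reflectH_eq_self_of_inner_eq x hxβ, hxβ, le_refl, if_true, max_self,
        min_self]
    · rw [polarize, if_neg hy, reflectH_reflectH hα, min_comm]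
  · right
    intro w
    have hy : inner ℝ (reflectH α β x) α ≤ β := by linarith
    exact ⟨if_neg hx, by rw [polarize, if_pos hy, reflectH_reflectH hα, max_comm]⟩

theorem polarize_pair_eq_or_swap (hα : ‖α‖ = 1) (u : EuclideanSpace ℝ (Fin N) → ℝ)
    (x : EuclideanSpace ℝ (Fin N)) :
    (polarize α β u x = u x ∧ polarize α β u (reflectH α β x) = u (reflectH α β x)) ∨
      (polarize α β u x = u (reflectH α β x) ∧ polarize α β u (reflectH α β x) = u x) := by
  rcases polarize_pair_eq_max_min_or_min_max (β := β) hα x with h | h <;>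
    obtain ⟨h₁, h₂⟩ := h u <;> rw [h₁, h₂] <;>
    rcases le_total (u x) (u (reflectH α β x)) with hle | hle <;> simp [hle]

theorem ConvexOn.map_polarize_sub_add_le {φ : ℝ → ℝ} (hφ : ConvexOn ℝ univ φ) (hα : ‖α‖ = 1)
    (u v : EuclideanSpace ℝ (Fin N) → ℝ) (x : EuclideanSpace ℝ (Fin N)) :
    φ (polarize α β u x - polarize α β v x) +
        φ (polarize α β u (reflectH α β x) - polarize α β v (reflectH α β x)) ≤
      φ (u x - v x) + φ (u (reflectH α β x) - v (reflectH α β x)) := by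
  rcases polarize_pair_eq_max_min_or_min_max (β := β) hα x with h | h <;>
    obtain ⟨hu₁, hu₂⟩ := h u <;> obtain ⟨hv₁, hv₂⟩ := h v <;> rw [hu₁, hu₂, hv₁, hv₂]
  · exact hφ.map_max_sub_max_add_map_min_sub_min_le _ _ _ _
  · rw [add_comm]
    exact hφ.map_max_sub_max_add_map_min_sub_min_le _ _ _ _

end Polarization

section TwoPoint

variable {X : Type*} [MeasurableSpace X] {μ : Measure X} {T : X → X}

theorem MeasureTheory.MeasurePreserving.lintegral_le_of_add_comp_le (hT : MeasurePreserving T μ μ)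
    {f g : X → ℝ≥0∞} (hf : Measurable f) (hg : Measurable g)
    (h : ∀ x, f x + f (T x) ≤ g x + g (T x)) : ∫⁻ x, f x ∂μ ≤ ∫⁻ x, g x ∂μ := by
  have h₂ : 2 * ∫⁻ x, f x ∂μ ≤ 2 * ∫⁻ x, g x ∂μ :=
    calc 2 * ∫⁻ x, f x ∂μ = ∫⁻ x, f x ∂μ + ∫⁻ x, f (T x) ∂μ := by
          rw [hT.lintegral_comp hf, two_mul]
      _ = ∫⁻ x, f x + f (T x) ∂μ := (lintegral_add_left hf _).symm
      _ ≤ ∫⁻ x, g x + g (T x) ∂μ := lintegral_mono h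
      _ = ∫⁻ x, g x ∂μ + ∫⁻ x, g (T x) ∂μ := lintegral_add_left hg _
      _ = 2 * ∫⁻ x, g x ∂μ := by rw [hT.lintegral_comp hg, two_mul]
  exact (ENNReal.mul_le_mul_iff_right two_ne_zero ENNReal.ofNat_ne_top).mp h₂

theorem MeasureTheory.MeasurePreserving.eLpNorm_le_of_add_comp_le {E F : Type*}
    [NormedAddCommGroup E] [MeasurableSpace E] [OpensMeasurableSpace E]
    [NormedAddCommGroup F] [MeasurableSpace F] [OpensMeasurableSpace F]
    (hT : MeasurePreserving T μ μ) {f : X → E} {g : X → F} (hf : Measurable f)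
    (hg : Measurable g) {p : ℝ≥0∞} (hp : p ≠ ⊤)
    (h : ∀ x, ‖f x‖ ^ p.toReal + ‖f (T x)‖ ^ p.toReal ≤ ‖g x‖ ^ p.toReal + ‖g (T x)‖ ^ p.toReal) :
    eLpNorm f p μ ≤ eLpNorm g p μ := by
  rcases eq_or_ne p 0 with rfl | hp₀
  · simp
  rw [eLpNorm_eq_lintegral_rpow_enorm_toReal hp₀ hp, eLpNorm_eq_lintegral_rpow_enorm_toReal hp₀ hp]
  have hr : 0 ≤ p.toReal := ENNReal.toReal_nonneg
  gcongr 1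
  refine hT.lintegral_le_of_add_comp_le (hf.enorm.pow_const _) (hg.enorm.pow_const _) fun x => ?_
  simp only [← ofReal_norm, ENNReal.ofReal_rpow_of_nonneg (norm_nonneg _) hr]
  rw [← ENNReal.ofReal_add (by positivity) (by positivity),
    ← ENNReal.ofReal_add (by positivity) (by positivity)]
  exact ENNReal.ofReal_le_ofReal (h x)

end TwoPoint

theorem stmt4_general {N : ℕ} (α : EuclideanSpace ℝ (Fin N)) (β : ℝ) (hα : ‖α‖ = 1)
    (u v : EuclideanSpace ℝ (Fin N) → ℝ) (hmu : Measurable u) (hmv : Measurable v)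
    (p : ℝ≥0∞) (hp : 1 ≤ p) (hp' : p ≠ ⊤) :
    (∀ x, (polarize α β u x = u x ∧
            polarize α β u (reflectH α β x) = u (reflectH α β x)) ∨
          (polarize α β u x = u (reflectH α β x) ∧
            polarize α β u (reflectH α β x) = u x)) ∧
    (∀ x, |polarize α β u x - polarize α β v x| +
            |polarize α β u (reflectH α β x) - polarize α β v (reflectH α β x)| ≤
          |u x - v x| + |u (reflectH α β x) - v (reflectH α β x)|) ∧
    eLpNorm (fun x => polarize α β u x - polarize α β v x) p volume ≤
      eLpNorm (fun x => u x - v x) p volume := by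
  have hr : 1 ≤ p.toReal := by simpa using ENNReal.toReal_mono hp' hp
  refine ⟨polarize_pair_eq_or_swap hα u, convexOn_univ_norm.map_polarize_sub_add_le hα u v,
    (measurePreserving_reflectH (β := β) hα).eLpNorm_le_of_add_comp_le
      ((measurable_polarize hmu).sub (measurable_polarize hmv)) (hmu.sub hmv) hp'
      ((convexOn_univ_norm_rpow hr).map_polarize_sub_add_le hα u v)⟩

/-- pointwise, `(u^H(x), u^H(x_H))` is a rearrangement of `(u(x), u(x_H))`;
for nonnegative `u, v` the two-point `L¹` contraction holds, and consequently
polarization is nonexpansive in `L^p`: `‖u^H − v^H‖_p ≤ ‖u − v‖_p`. -/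
theorem stmt4 {N : ℕ} (α : EuclideanSpace ℝ (Fin N)) (β : ℝ) (hα : ‖α‖ = 1)
    (u v : EuclideanSpace ℝ (Fin N) → ℝ) (hmu : Measurable u) (hmv : Measurable v)
    (hu : ∀ x, 0 ≤ u x) (hv : ∀ x, 0 ≤ v x)
    (p : ℝ≥0∞) (hp : 1 ≤ p) (hp' : p ≠ ⊤) :
    (∀ x, (polarize α β u x = u x ∧
            polarize α β u (reflectH α β x) = u (reflectH α β x)) ∨
          (polarize α β u x = u (reflectH α β x) ∧
            polarize α β u (reflectH α β x) = u x)) ∧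
    (∀ x, |polarize α β u x - polarize α β v x| +
            |polarize α β u (reflectH α β x) - polarize α β v (reflectH α β x)| ≤
          |u x - v x| + |u (reflectH α β x) - v (reflectH α β x)|) ∧
    eLpNorm (fun x => polarize α β u x - polarize α β v x) p volume ≤
      eLpNorm (fun x => u x - v x) p volume :=
  stmt4_general α β hα u v hmu hmv p hp hp'
end

section
/- For real numbers a, b, c, d and p ≥ 1, it holds that |max{a,b} − max{c,d}|^p + |min{a,b} − min{c,d}|^p ≤ |a − c|^p + |b − d|^p. -/
/-! If `a`, `b` and `c`, `d` are ordered the same way, the max/min pairs are the pairs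
themselves. Otherwise, say `b ≤ a` and `c ≤ d`, the left side is `|a - d|^p + |b - c|^p`,
and `a - d`, `b - c` lie between `b - d` and `a - c` with the same sum, so the inequality
is two-point majorization for the convex function `x ↦ |x|^p`. -/

open Set

lemma convexOn_rpow_abs {p : ℝ} (hp : 1 ≤ p) : ConvexOn ℝ univ fun x : ℝ => |x| ^ p := by
  refine ⟨convex_univ, fun x _ y _ a b ha hb hab => ?_⟩
  have hnorm : |a • x + b • y| ≤ a • |x| + b • |y| :=
    convexOn_univ_norm.2 (mem_univ x) (mem_univ y) ha hb hab
  calc |a • x + b • y| ^ p ≤ (a • |x| + b • |y|) ^ p :=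
        Real.rpow_le_rpow (abs_nonneg _) hnorm (zero_le_one.trans hp)
    _ ≤ a • |x| ^ p + b • |y| ^ p :=
        (convexOn_rpow hp).2 (abs_nonneg x) (abs_nonneg y) ha hb hab

lemma ConvexOn.map_add_map_le_of_add_eq_s5 {s : Set ℝ} {f : ℝ → ℝ} (hf : ConvexOn ℝ s f)
    {x y x' y' : ℝ} (hx : x ∈ s) (hy : y ∈ s) (hyx' : y ≤ x') (hx'x : x' ≤ x)
    (hsum : x' + y' = x + y) : f x' + f y' ≤ f x + f y := by
  obtain ⟨a, b, ha, hb, hab, rfl⟩ : x' ∈ segment ℝ y x := by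
    rw [segment_eq_Icc (hyx'.trans hx'x)]
    exact ⟨hyx', hx'x⟩
  have hy' : y' = b • y + a • x := by
    simp only [smul_eq_mul] at hsum ⊢
    linear_combination hsum - (x + y) * hab
  calc f (a • y + b • x) + f y' ≤ (a • f y + b • f x) + (b • f y + a • f x) := by
        rw [hy']
        exact add_le_add (hf.2 hy hx ha hb hab) (hf.2 hy hx hb ha (by rw [add_comm, hab]))
    _ = f x + f y := by
        simp only [smul_eq_mul]
        linear_combination (f x + f y) * hab

lemma abs_sub_rpow_add_abs_sub_rpow_le {p a b c d : ℝ} (hp : 1 ≤ p) (hba : b ≤ a) (hcd : c ≤ d) :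
    |a - d| ^ p + |b - c| ^ p ≤ |a - c| ^ p + |b - d| ^ p :=
  (convexOn_rpow_abs hp).map_add_map_le_of_add_eq_s5 (mem_univ _) (mem_univ _)
    (by linarith) (by linarith) (by ring)

/-- for `p ≥ 1`,
`|max a b − max c d|^p + |min a b − min c d|^p ≤ |a−c|^p + |b−d|^p`. -/
theorem stmt5 (a b c d p : ℝ) (hp : 1 ≤ p) :
    |max a b - max c d| ^ p + |min a b - min c d| ^ p ≤ |a - c| ^ p + |b - d| ^ p := by
  rcases le_total a b with hab | hba <;> rcases le_total c d with hcd | hdc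
  · rw [max_eq_right hab, max_eq_right hcd, min_eq_left hab, min_eq_left hcd, add_comm]
  · rw [max_eq_right hab, max_eq_left hdc, min_eq_left hab, min_eq_right hdc,
      add_comm (|a - c| ^ p)]
    exact abs_sub_rpow_add_abs_sub_rpow_le hp hab hdc
  · rw [max_eq_left hba, max_eq_right hcd, min_eq_right hba, min_eq_left hcd]
    exact abs_sub_rpow_add_abs_sub_rpow_le hp hba hcd
  · rw [max_eq_left hba, max_eq_left hdc, min_eq_right hba, min_eq_right hdc]
end

section
/- Assume j(s,|ξ|) is C¹, with {|ξ| ↦ j(s,|ξ|)} convex and increasing for each s, j(s,0) = 0, and 0 ≤ j(s,|ξ|) ≤ α(|s|)|ξ|² for a positive increasing continuous function α. Then |j_ξ(s,ξ)| ≤ 4α(|s|)|ξ| for every s ∈ ℝ and ξ ∈ ℝ^N. -/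
/-!
Convexity brackets the derivative by secant slopes: `f'(t) ≤ (f(2t) - f(t)) / t ≤ f(2t) / t ≤ 4ct`
once `0 ≤ f ≤ c t²`, and monotonicity makes `f'(t) ≥ 0`. At `t = 0` the secant from `0` to `y`
gives `f'(0) ≤ c y` for every `y > 0`, hence `f'(0) ≤ 0`.
-/

open Set Filter Topology

lemma MonotoneOn.deriv_nonneg {f : ℝ → ℝ} {s : Set ℝ} {x : ℝ} (hf : MonotoneOn f s)
    (hs : UniqueDiffWithinAt ℝ s x) (hd : DifferentiableAt ℝ f x) : 0 ≤ deriv f x :=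
  hd.derivWithin hs ▸ hf.derivWithin_nonneg

lemma ConvexOn.deriv_le_div_sub {f : ℝ → ℝ} {S : Set ℝ} {t y b : ℝ} (hf : ConvexOn ℝ S f)
    (ht : t ∈ S) (hy : y ∈ S) (hty : t < y) (hd : DifferentiableAt ℝ f t)
    (hft : 0 ≤ f t) (hfy : f y ≤ b) : deriv f t ≤ b / (y - t) :=
  calc deriv f t ≤ slope f t y := hf.deriv_le_slope ht hy hty hd
    _ = (f y - f t) / (y - t) := by rw [slope_def_field]
    _ ≤ b / (y - t) := by gcongr; linarith

lemma ConvexOn.deriv_le_of_le_mul_sq {f : ℝ → ℝ} {c t : ℝ} (hf : ConvexOn ℝ (Ici 0) f)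
    (hbound : ∀ x, 0 ≤ x → 0 ≤ f x ∧ f x ≤ c * x ^ 2) (ht : 0 ≤ t)
    (hd : DifferentiableAt ℝ f t) : deriv f t ≤ 4 * c * t := by
  have hsecant {y : ℝ} (hty : t < y) : deriv f t ≤ c * y ^ 2 / (y - t) :=
    hf.deriv_le_div_sub ht (ht.trans hty.le) hty hd (hbound t ht).1
      (hbound y (ht.trans hty.le)).2
  rcases ht.eq_or_lt with rfl | htpos
  · have hlim : Tendsto (fun y : ℝ => c * y) (𝓝[>] 0) (𝓝 0) := by
      simpa using ((continuous_const_mul c).tendsto 0).mono_left nhdsWithin_le_nhds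
    have hle : deriv f 0 ≤ 0 := ge_of_tendsto hlim <| by
      filter_upwards [self_mem_nhdsWithin] with y (hy : 0 < y)
      calc deriv f 0 ≤ c * y ^ 2 / (y - 0) := hsecant hy
        _ = c * y := by rw [sub_zero]; field_simp
    simpa using hle
  · calc deriv f t ≤ c * (2 * t) ^ 2 / (2 * t - t) := hsecant (by linarith)
      _ = 4 * c * t := by field_simp; ring

theorem stmt12_general (j : ℝ → ℝ → ℝ) (α : ℝ → ℝ)
    (hconv : ∀ s, ConvexOn ℝ (Set.Ici 0) (j s))
    (hmono : ∀ s, MonotoneOn (j s) (Set.Ici 0))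
    (hdiff : ∀ s : ℝ, ∀ t : ℝ, 0 ≤ t → DifferentiableAt ℝ (j s) t)
    (hbound : ∀ s t : ℝ, 0 ≤ t → 0 ≤ j s t ∧ j s t ≤ α |s| * t ^ 2) :
    ∀ s t : ℝ, 0 ≤ t → |deriv (j s) t| ≤ 4 * α |s| * t := by
  intro s t ht
  have hnonneg : 0 ≤ deriv (j s) t :=
    (hmono s).deriv_nonneg (uniqueDiffOn_Ici 0 t ht) (hdiff s t ht)
  rw [abs_of_nonneg hnonneg]
  exact (hconv s).deriv_le_of_le_mul_sq (hbound s) ht (hdiff s t ht)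

/-- if `t ↦ j(s,t)` is convex, increasing, differentiable with `j(s,0)=0`
and `0 ≤ j(s,t) ≤ α(|s|) t²`, with `α` positive, increasing and continuous, then the
derivative satisfies `|∂_t j(s,t)| ≤ 4 α(|s|) t` for all `s` and `t ≥ 0` (i.e.
`|j_ξ(s,ξ)| ≤ 4 α(|s|)|ξ|`). -/
theorem stmt12 (j : ℝ → ℝ → ℝ) (α : ℝ → ℝ)
    (hα_pos : ∀ s, 0 < α s) (hα_mono : Monotone α) (hα_cont : Continuous α)
    (hconv : ∀ s, ConvexOn ℝ (Set.Ici 0) (j s))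
    (hmono : ∀ s, MonotoneOn (j s) (Set.Ici 0))
    (hdiff : ∀ s : ℝ, ∀ t : ℝ, 0 ≤ t → DifferentiableAt ℝ (j s) t)
    (hzero : ∀ s, j s 0 = 0)
    (hbound : ∀ s t : ℝ, 0 ≤ t → 0 ≤ j s t ∧ j s t ≤ α |s| * t ^ 2) :
    ∀ s t : ℝ, 0 ≤ t → |deriv (j s) t| ≤ 4 * α |s| * t :=
  stmt12_general j α hconv hmono hdiff hbound
end

section
/- Let X be a metric space, f : X → ℝ continuous, u ∈ X, and suppose the weak slope |df|(u) is finite. Then the weak slope of the epigraph function G_f at (u, f(u)) (with respect to the product metric d₁) satisfies |dG_f|(u, f(u)) = |df|(u)/√(1 + |df|(u)²); while if |df|(u) = +∞ or f(u) < ξ then |dG_f|(u,ξ) = 1. In particular, |dG_f|(u,ξ) < 1 forces ξ = f(u). -/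
/-- The set of admissible constants `σ` in the definition of the weak slope of `g` at `u`,
with respect to an explicit distance function `dY` (the topology being the ambient one):
`σ ∈ slopeSetD dY g u` iff `σ ≥ 0` and there are `δ > 0` and a continuous deformation `H`
on the `dY`-ball of radius `δ` with `dY(H(v,t),v) ≤ t` and `g(H(v,t)) ≤ g(v) − σ t`.
The weak slope is the supremum of this set (finite iff the set is bounded above). -/
def slopeSetD {Y : Type*} [TopologicalSpace Y] (dY : Y → Y → ℝ) (g : Y → ℝ) (u : Y) :
    Set ℝ :=
  {σ | 0 ≤ σ ∧ ∃ δ : ℝ, 0 < δ ∧ ∃ H : Y → ℝ → Y,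
    ContinuousOn (fun q : Y × ℝ => H q.1 q.2) ({v | dY u v < δ} ×ˢ Set.Icc 0 δ) ∧
    ∀ v, dY u v < δ → ∀ t ∈ Set.Icc (0 : ℝ) δ,
      dY (H v t) v ≤ t ∧ g (H v t) ≤ g v - σ * t}

/-- The metric `d₁` on the epigraph of a continuous `f : X → ℝ`. -/
noncomputable def epiDist {X : Type*} [MetricSpace X] (f : X → ℝ) :
    {p : X × ℝ // f p.1 ≤ p.2} → {p : X × ℝ // f p.1 ≤ p.2} → ℝ :=
  fun p q => Real.sqrt (dist p.1.1 q.1.1 ^ 2 + (p.1.2 - q.1.2) ^ 2)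

/-- The epigraph function `G_f(u,ξ) = ξ`. -/
def epiFun {X : Type*} [MetricSpace X] (f : X → ℝ) : {p : X × ℝ // f p.1 ≤ p.2} → ℝ :=
  fun p => p.1.2

/-!
A deformation `H` of `f` with slope `σ` lifts to the epigraph as
`(v, μ) ↦ (H(v, t/c), μ - σ t/c)` with `c = √(1 + σ²)`: it moves with `d₁`-speed at most `1`
and lowers `G_f` with slope `σ/c`. Conversely, running a deformation of `G_f` with slope `τ < 1`
from graph points at speed `c` and keeping the first component gives a deformation of `f`
whose slope `σ` satisfies `τ = σ/c`, since the vertical drop `≥ τ s` leaves horizontal room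
`√(1 - τ²) s` only. So `x ↦ x/√(1 + x²) = sin (arctan x)`, an increasing continuous bijection
`[0, ∞) → [0, 1)`, maps the slope set of `f` at `u` onto that of `G_f` at `(u, f u)`.
Above the graph, the vertical descent `(v, μ - t)` has slope `1`, the largest possible.
-/

open Real Set Topology

section SlopeSet

variable {Y : Type*} [TopologicalSpace Y] {dY : Y → Y → ℝ} {g : Y → ℝ} {u : Y}

lemma zero_mem_slopeSetD (h : ∀ v, dY v v = 0) : (0 : ℝ) ∈ slopeSetD dY g u :=
  ⟨le_rfl, 1, one_pos, fun v _ => v, continuous_fst.continuousOn,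
    fun v _ t ht => ⟨(h v).trans_le ht.1, by simp⟩⟩

lemma mem_slopeSetD_of_le {σ σ' : ℝ} (hσ : σ ∈ slopeSetD dY g u) (h0 : 0 ≤ σ') (hle : σ' ≤ σ) :
    σ' ∈ slopeSetD dY g u := by
  obtain ⟨-, δ, hδ, H, Hc, Hp⟩ := hσ
  refine ⟨h0, δ, hδ, H, Hc, fun v hv t ht => ?_⟩
  obtain ⟨hd, hg⟩ := Hp v hv t ht
  exact ⟨hd, hg.trans (by nlinarith [ht.1])⟩

lemma Ici_subset_slopeSetD (h : ¬ BddAbove (slopeSetD dY g u)) : Ici 0 ⊆ slopeSetD dY g u := by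
  intro σ hσ
  obtain ⟨σ', hσ', hlt⟩ := not_bddAbove_iff.1 h σ
  exact mem_slopeSetD_of_le hσ' hσ hlt.le

end SlopeSet

section DivSqrtOneAddSq

lemma strictMono_div_sqrt_one_add_sq : StrictMono fun x : ℝ => x / √(1 + x ^ 2) := by
  intro x y hxy
  simp only [← sin_arctan]
  exact strictMonoOn_sin ⟨(neg_pi_div_two_lt_arctan x).le, (arctan_lt_pi_div_two x).le⟩
    ⟨(neg_pi_div_two_lt_arctan y).le, (arctan_lt_pi_div_two y).le⟩ (arctan_strictMono hxy)

lemma continuous_div_sqrt_one_add_sq : Continuous fun x : ℝ => x / √(1 + x ^ 2) := by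
  simp only [← sin_arctan]
  fun_prop

lemma div_sqrt_one_add_sq_mem_Ico {x : ℝ} (hx : 0 ≤ x) : x / √(1 + x ^ 2) ∈ Ico 0 1 := by
  refine ⟨by positivity, ?_⟩
  rw [← sin_arctan, ← sin_pi_div_two]
  exact strictMonoOn_sin ⟨(neg_pi_div_two_lt_arctan x).le, (arctan_lt_pi_div_two x).le⟩
    ⟨by linarith [pi_pos], le_rfl⟩ (arctan_lt_pi_div_two x)

lemma exists_div_sqrt_one_add_sq_eq {t : ℝ} (ht : t ∈ Ico 0 1) :
    ∃ x, 0 ≤ x ∧ x / √(1 + x ^ 2) = t := by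
  obtain ⟨ht0, ht1⟩ := ht
  refine ⟨tan (arcsin t), by rw [tan_arcsin]; positivity, ?_⟩
  rw [← sin_arctan, arctan_tan (neg_pi_div_two_lt_arcsin.2 (by linarith))
    (arcsin_lt_pi_div_two.2 ht1), sin_arcsin (by linarith) ht1.le]

end DivSqrtOneAddSq

lemma ContinuousOn.subtype_mk {α β : Type*} [TopologicalSpace α] [TopologicalSpace β]
    {p : β → Prop} {g : α → β} {s : Set α} (hg : ContinuousOn g s) (hp : ∀ x, p (g x)) :
    ContinuousOn (fun x => (⟨g x, hp x⟩ : Subtype p)) s :=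
  Topology.IsInducing.subtypeVal.continuousOn_iff.2 hg

section Epigraph

variable {X : Type*} [MetricSpace X] {f : X → ℝ}

lemma epiDist_self (p : {p : X × ℝ // f p.1 ≤ p.2}) : epiDist f p p = 0 := by
  simp [epiDist]

lemma dist_le_epiDist (p q : {p : X × ℝ // f p.1 ≤ p.2}) :
    dist p.1.1 q.1.1 ≤ epiDist f p q :=
  (le_abs_self _).trans (abs_le_sqrt (le_add_of_nonneg_right (sq_nonneg _)))

lemma abs_sub_le_epiDist (p q : {p : X × ℝ // f p.1 ≤ p.2}) :
    |p.1.2 - q.1.2| ≤ epiDist f p q :=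
  abs_le_sqrt (le_add_of_nonneg_left (sq_nonneg _))

lemma epiDist_le_iff {p q : {p : X × ℝ // f p.1 ≤ p.2}} {t : ℝ} (ht : 0 ≤ t) :
    epiDist f p q ≤ t ↔ dist p.1.1 q.1.1 ^ 2 + (p.1.2 - q.1.2) ^ 2 ≤ t ^ 2 :=
  sqrt_le_left ht

lemma le_one_of_mem_slopeSetD_epiFun {p₀ : {p : X × ℝ // f p.1 ≤ p.2}} {τ : ℝ}
    (hτ : τ ∈ slopeSetD (epiDist f) (epiFun f) p₀) : τ ≤ 1 := by
  obtain ⟨-, δ, hδ, H, -, Hp⟩ := hτ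
  obtain ⟨hd, hG⟩ := Hp p₀ ((epiDist_self p₀).trans_lt hδ) δ ⟨hδ.le, le_rfl⟩
  have hdrop : p₀.1.2 - (H p₀ δ).1.2 ≤ δ :=
    (le_abs_self _).trans ((abs_sub_comm _ _).trans_le ((abs_sub_le_epiDist _ _).trans hd))
  have : τ * δ ≤ 1 * δ := by simp only [epiFun] at hG; linarith
  exact le_of_mul_le_mul_right this hδ

lemma bddAbove_slopeSetD_epiFun (p₀ : {p : X × ℝ // f p.1 ≤ p.2}) :
    BddAbove (slopeSetD (epiDist f) (epiFun f) p₀) :=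
  ⟨1, fun _ => le_one_of_mem_slopeSetD_epiFun⟩

lemma one_mem_slopeSetD_epiFun (hf : Continuous f) {u : X} {ξ : ℝ} (hlt : f u < ξ) :
    (1 : ℝ) ∈ slopeSetD (epiDist f) (epiFun f) ⟨(u, ξ), hlt.le⟩ := by
  obtain ⟨δ₁, hδ₁, hfδ₁⟩ := Metric.continuous_iff.1 hf u ((ξ - f u) / 2) (by linarith)
  set δ := min δ₁ ((ξ - f u) / 4)
  refine ⟨zero_le_one, δ, lt_min hδ₁ (by linarith), fun p t =>
    ⟨(p.1.1, max (p.1.2 - t) (f p.1.1)), le_max_right _ _⟩, ?_, ?_⟩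
  · exact ContinuousOn.subtype_mk
      (ContinuousOn.prodMk (by fun_prop) (ContinuousOn.sup (by fun_prop) (by fun_prop))) _
  · rintro ⟨⟨v, μ⟩, hvμ⟩ hp t ht
    have hv : dist v u < δ₁ :=
      (dist_comm v u).trans_lt ((dist_le_epiDist _ _).trans_lt (hp.trans_le (min_le_left _ _)))
    have hfv := (abs_lt.1 (Real.dist_eq _ _ ▸ hfδ₁ v hv)).2
    have hμ := (abs_lt.1 ((abs_sub_le_epiDist _ _).trans_lt hp)).2
    have hδ : δ ≤ (ξ - f u) / 4 := min_le_right _ _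
    have hmax : max (μ - t) (f v) = μ - t := max_eq_left (by dsimp only at hμ; linarith [ht.2])
    refine ⟨(epiDist_le_iff ht.1).2 ?_, ?_⟩ <;> simp [epiFun, hmax]

lemma div_sqrt_one_add_sq_mem_slopeSetD_epiFun (hf : Continuous f) {u : X} {σ : ℝ}
    (hσ : σ ∈ slopeSetD dist f u) :
    σ / √(1 + σ ^ 2) ∈ slopeSetD (epiDist f) (epiFun f) ⟨(u, f u), le_rfl⟩ := by
  obtain ⟨hσ0, δ, hδ, H, Hc, Hp⟩ := hσ
  set c := √(1 + σ ^ 2)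
  have hc1 : 1 ≤ c := one_le_sqrt.2 (by nlinarith)
  have hc0 : 0 < c := one_pos.trans_le hc1
  have hball : ∀ p : {p : X × ℝ // f p.1 ≤ p.2},
      epiDist f ⟨(u, f u), le_rfl⟩ p < δ → dist u p.1.1 < δ :=
    fun p hp => (dist_le_epiDist _ _).trans_lt hp
  have htime : ∀ t ∈ Icc 0 δ, t / c ∈ Icc 0 δ :=
    fun t ht => ⟨div_nonneg ht.1 hc0.le, (div_le_self ht.1 hc1).trans ht.2⟩
  refine ⟨div_nonneg hσ0 hc0.le, δ, hδ, fun p t =>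
    ⟨(H p.1.1 (t / c), max (p.1.2 - σ * (t / c)) (f (H p.1.1 (t / c)))), le_max_right _ _⟩,
    ?_, ?_⟩
  · have hH : ContinuousOn (fun q : {p : X × ℝ // f p.1 ≤ p.2} × ℝ => H q.1.1.1 (q.2 / c))
        ({v | epiDist f ⟨(u, f u), le_rfl⟩ v < δ} ×ˢ Icc 0 δ) :=
      Hc.comp (f := fun q : {p : X × ℝ // f p.1 ≤ p.2} × ℝ => (q.1.1.1, q.2 / c))
        (by fun_prop) fun q hq => ⟨hball q.1 hq.1, htime q.2 hq.2⟩
    exact ContinuousOn.subtype_mk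
      (hH.prodMk (ContinuousOn.sup (by fun_prop) (hf.comp_continuousOn hH))) _
  · rintro ⟨⟨v, μ⟩, hvμ⟩ hp t ht
    obtain ⟨hd, hfH⟩ := Hp v (hball _ hp) (t / c) (htime t ht)
    have hmax : max (μ - σ * (t / c)) (f (H v (t / c))) = μ - σ * (t / c) :=
      max_eq_left (hfH.trans (by dsimp only at hvμ; linarith))
    have hd2 : dist (H v (t / c)) v ^ 2 ≤ (t / c) ^ 2 := pow_le_pow_left₀ dist_nonneg hd 2
    have hc2 : c ^ 2 = 1 + σ ^ 2 := sq_sqrt (by positivity)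
    refine ⟨(epiDist_le_iff ht.1).2 ?_, ?_⟩
    · calc dist (H v (t / c)) v ^ 2 + (max (μ - σ * (t / c)) (f (H v (t / c))) - μ) ^ 2
          ≤ (1 + σ ^ 2) * (t / c) ^ 2 := by rw [hmax]; nlinarith
        _ = t ^ 2 := by rw [← hc2]; field_simp
    · apply le_of_eq
      simp only [epiFun, hmax]
      ring

lemma eventually_epiDist_graph_lt (hf : Continuous f) (u : X) {δ : ℝ} (hδ : 0 < δ) :
    ∀ᶠ v in 𝓝 u, epiDist f ⟨(u, f u), le_rfl⟩ ⟨(v, f v), le_rfl⟩ < δ := by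
  have hcont : Continuous fun v => epiDist f ⟨(u, f u), le_rfl⟩ ⟨(v, f v), le_rfl⟩ := by
    unfold epiDist
    fun_prop
  exact hcont.continuousAt.eventually_lt continuousAt_const ((epiDist_self _).trans_lt hδ)

lemma mem_slopeSetD_of_div_sqrt_one_add_sq_mem (hf : Continuous f) {u : X} {σ : ℝ}
    (hσ0 : 0 ≤ σ)
    (hσ : σ / √(1 + σ ^ 2) ∈ slopeSetD (epiDist f) (epiFun f) ⟨(u, f u), le_rfl⟩) :
    σ ∈ slopeSetD dist f u := by
  obtain ⟨-, δ, hδ, K, Kc, Kp⟩ := hσ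
  set c := √(1 + σ ^ 2)
  have hc2 : c ^ 2 = 1 + σ ^ 2 := sq_sqrt (by positivity)
  have hc0 : 0 < c := sqrt_pos.2 (by positivity)
  obtain ⟨δ₂, hδ₂, hlift⟩ := Metric.eventually_nhds_iff.1 (eventually_epiDist_graph_lt hf u hδ)
  set δ' := min δ₂ (δ / c)
  have hball : ∀ v, dist u v < δ' →
      epiDist f ⟨(u, f u), le_rfl⟩ ⟨(v, f v), le_rfl⟩ < δ :=
    fun v hv => hlift ((dist_comm v u).trans_lt (hv.trans_le (min_le_left _ _)))
  have htime : ∀ r ∈ Icc 0 δ', r * c ∈ Icc 0 δ := fun r hr =>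
    ⟨by nlinarith [hr.1], (le_div_iff₀ hc0).1 (hr.2.trans (min_le_right _ _))⟩
  refine ⟨hσ0, δ', lt_min hδ₂ (div_pos hδ hc0), fun v r => (K ⟨(v, f v), le_rfl⟩ (r * c)).1.1,
    ?_, ?_⟩
  · have hgraph : Continuous fun q : X × ℝ =>
        ((⟨(q.1, f q.1), le_rfl⟩ : {p : X × ℝ // f p.1 ≤ p.2}), q.2 * c) :=
      (Continuous.subtype_mk (by fun_prop) _).prodMk (by fun_prop)
    exact (continuous_fst.comp continuous_subtype_val).comp_continuousOn
      (Kc.comp hgraph.continuousOn fun q hq => ⟨hball q.1 hq.1, htime q.2 hq.2⟩)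
  · intro v hv r hr
    obtain ⟨hd, hG⟩ := Kp _ (hball v hv) (r * c) (htime r hr)
    set q := K ⟨(v, f v), le_rfl⟩ (r * c)
    have hdrop : q.1.2 ≤ f v - σ * r := by
      have hscale : σ / c * (r * c) = σ * r := by field_simp
      rwa [← hscale]
    have hd2 : dist q.1.1 v ^ 2 + (q.1.2 - f v) ^ 2 ≤ (r * c) ^ 2 :=
      (epiDist_le_iff (htime r hr).1).1 hd
    have hvert : (σ * r) ^ 2 ≤ (f v - q.1.2) ^ 2 :=
      pow_le_pow_left₀ (mul_nonneg hσ0 hr.1) (by linarith) 2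
    refine ⟨(pow_le_pow_iff_left₀ dist_nonneg hr.1 two_ne_zero).1 ?_, q.2.trans hdrop⟩
    calc dist q.1.1 v ^ 2 ≤ (r * c) ^ 2 - (σ * r) ^ 2 := by nlinarith
      _ = r ^ 2 := by rw [mul_pow, hc2]; ring

end Epigraph

section SlopeOfEpigraph

variable {X : Type*} [MetricSpace X] {f : X → ℝ}

lemma slopeSetD_epiFun_eq_image (hf : Continuous f) {u : X}
    (hb : BddAbove (slopeSetD dist f u)) :
    slopeSetD (epiDist f) (epiFun f) ⟨(u, f u), le_rfl⟩ =
      (fun x : ℝ => x / √(1 + x ^ 2)) '' slopeSetD dist f u := by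
  refine Subset.antisymm (fun τ hτ => ?_) ?_
  · have hτ1 : τ < 1 := by
      refine (le_one_of_mem_slopeSetD_epiFun hτ).lt_of_ne ?_
      rintro rfl
      refine not_bddAbove_Ici (0 : ℝ) (hb.mono fun x hx => ?_)
      obtain ⟨h0, h1⟩ := div_sqrt_one_add_sq_mem_Ico hx
      exact mem_slopeSetD_of_div_sqrt_one_add_sq_mem hf hx (mem_slopeSetD_of_le hτ h0 h1.le)
    obtain ⟨σ, hσ0, rfl⟩ := exists_div_sqrt_one_add_sq_eq ⟨hτ.1, hτ1⟩
    exact ⟨σ, mem_slopeSetD_of_div_sqrt_one_add_sq_mem hf hσ0 hτ, rfl⟩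
  · rintro _ ⟨σ, hσ, rfl⟩
    exact div_sqrt_one_add_sq_mem_slopeSetD_epiFun hf hσ

lemma Ico_subset_slopeSetD_epiFun (hf : Continuous f) {u : X}
    (hnb : ¬ BddAbove (slopeSetD dist f u)) :
    Ico 0 1 ⊆ slopeSetD (epiDist f) (epiFun f) ⟨(u, f u), le_rfl⟩ := by
  intro τ hτ
  obtain ⟨σ, hσ0, rfl⟩ := exists_div_sqrt_one_add_sq_eq hτ
  exact div_sqrt_one_add_sq_mem_slopeSetD_epiFun hf (Ici_subset_slopeSetD hnb hσ0)

end SlopeOfEpigraph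

/-- for `f : X → ℝ` continuous, the weak slope of the epigraph function
`G_f` at `(u, f u)` (w.r.t. the metric `d₁`) equals `|df|(u)/√(1+|df|(u)²)` when the weak
slope `|df|(u)` is finite, and equals `1` when `|df|(u) = +∞` or when `f(u) < ξ`.
In particular `|dG_f|(u,ξ) < 1` forces `ξ = f(u)`. -/
theorem stmt15 {X : Type*} [MetricSpace X] (f : X → ℝ) (hf : Continuous f)
    (u : X) (ξ : ℝ) (hξ : f u ≤ ξ) :
    (BddAbove (slopeSetD dist f u) →
      sSup (slopeSetD (epiDist f) (epiFun f) ⟨(u, f u), le_refl _⟩) =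
        sSup (slopeSetD dist f u) / Real.sqrt (1 + sSup (slopeSetD dist f u) ^ 2)) ∧
    (¬ BddAbove (slopeSetD dist f u) →
      sSup (slopeSetD (epiDist f) (epiFun f) ⟨(u, f u), le_refl _⟩) = 1) ∧
    (f u < ξ → sSup (slopeSetD (epiDist f) (epiFun f) ⟨(u, ξ), hξ⟩) = 1) ∧
    (sSup (slopeSetD (epiDist f) (epiFun f) ⟨(u, ξ), hξ⟩) < 1 → ξ = f u) := by
  have above : f u < ξ → sSup (slopeSetD (epiDist f) (epiFun f) ⟨(u, ξ), hξ⟩) = 1 :=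
    fun hlt => IsGreatest.csSup_eq
      ⟨one_mem_slopeSetD_epiFun hf hlt, fun _ => le_one_of_mem_slopeSetD_epiFun⟩
  refine ⟨fun hb => ?_, fun hnb => ?_, above, fun hlt1 => ?_⟩
  · rw [slopeSetD_epiFun_eq_image hf hb,
      ← strictMono_div_sqrt_one_add_sq.monotone.map_csSup_of_continuousAt
        continuous_div_sqrt_one_add_sq.continuousAt ⟨0, zero_mem_slopeSetD dist_self⟩ hb]
  · refine le_antisymm
      (csSup_le ⟨0, zero_mem_slopeSetD epiDist_self⟩ fun _ => le_one_of_mem_slopeSetD_epiFun) ?_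
    calc (1 : ℝ) = sSup (Ico 0 1) := (csSup_Ico one_pos).symm
      _ ≤ _ := csSup_le_csSup (bddAbove_slopeSetD_epiFun _) (nonempty_Ico.2 one_pos)
          (Ico_subset_slopeSetD_epiFun hf hnb)
  · by_contra hne
    exact hlt1.ne (above (hξ.lt_of_ne' hne))
end

section
/- Let X be a complete metric space and f : X → ℝ a continuous function. Suppose Γ, Γ₀ and levels a < c are as in the minimax setting: c = inf_{γ∈Γ} sup_{τ∈𝔻} f(γ(τ)) > sup_{γ₀∈Γ₀} sup_{τ∈𝕊} f(γ₀(τ)) = a, where Γ = {γ ∈ C(𝔻,X) : γ|_𝕊 ∈ Γ₀}. Assume there is a deformation η : X × [0,1] → X with d(η(u,t),u) ≤ 2δt, f(η(u,t)) < f(u) whenever η(u,t) ≠ u, and f(η(u,1)) ≤ c − ε for all u ∈ γ(𝔻) ∩ f^{-1}([c−2ε,c+2ε]) with c − ε ≤ f(u) ≤ c + ε, where γ ∈ Γ satisfies sup_𝔻 f∘γ ≤ c + ε and 0 < ε < (c−a)/2. Then, defining the modified path γ̃(τ) = η(γ(τ), Ξ(γ(τ))) with Ξ : X → [0,1] continuous,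 Ξ = 0 on {f ≤ a} and Ξ = 1 on {f ≥ c−ε}, one has γ̃ ∈ Γ and sup_{τ∈𝔻} f(γ̃(τ)) ≤ c − ε, contradicting the definition of c. Hence no such global deformation exists. -/
/-- deformation–contradiction step of the nonsmooth minimax theorem:
in the minimax setting `a < c`, `0 < ε < (c−a)/2`, with `γ ∈ Γ` satisfying
`sup_𝔻 f∘γ ≤ c + ε`, the existence of a deformation `η` with `d(η(u,t),u) ≤ 2δt`,
`f(η(u,t)) ≤ f(u)`, and `f(η(u,1)) ≤ c − ε` on `γ(𝔻) ∩ {c−ε ≤ f ≤ c+ε}`, together with a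
continuous cutoff `Ξ : X → [0,1]` vanishing on `{f ≤ a}` and equal to `1` on `{f ≥ c−ε}`,
produces a modified path `γ̃(τ) = η(γ(τ),Ξ(γ(τ)))` in `Γ` with `sup_𝔻 f∘γ̃ ≤ c − ε`,
contradicting the minimax characterization of `c`. Hence no such deformation exists. -/
theorem stmt16 {X : Type*} [MetricSpace X] [CompleteSpace X]
    (f : X → ℝ) (hf : Continuous f)
    {N : ℕ} (Γ₀ : Set (EuclideanSpace ℝ (Fin N) → X))
    (a c ε δ : ℝ) (hδ : 0 < δ) (hε : 0 < ε) (hεc : ε < (c - a) / 2)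
    (ha : ∀ γ₀ ∈ Γ₀, ∀ τ ∈ Metric.sphere (0 : EuclideanSpace ℝ (Fin N)) 1, f (γ₀ τ) ≤ a)
    (hc : ∀ γ' : EuclideanSpace ℝ (Fin N) → X,
      ContinuousOn γ' (Metric.closedBall 0 1) →
      (∃ γ₀ ∈ Γ₀, ∀ τ ∈ Metric.sphere (0 : EuclideanSpace ℝ (Fin N)) 1, γ' τ = γ₀ τ) →
      ∃ τ ∈ Metric.closedBall (0 : EuclideanSpace ℝ (Fin N)) 1, c ≤ f (γ' τ))
    (γ : EuclideanSpace ℝ (Fin N) → X)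
    (hγcont : ContinuousOn γ (Metric.closedBall 0 1))
    (hγmem : ∃ γ₀ ∈ Γ₀, ∀ τ ∈ Metric.sphere (0 : EuclideanSpace ℝ (Fin N)) 1, γ τ = γ₀ τ)
    (hγsup : ∀ τ ∈ Metric.closedBall (0 : EuclideanSpace ℝ (Fin N)) 1, f (γ τ) ≤ c + ε)
    (η : X → ℝ → X) (hηcont : Continuous fun p : X × ℝ => η p.1 p.2)
    (hηdist : ∀ u : X, ∀ t ∈ Set.Icc (0 : ℝ) 1, dist (η u t) u ≤ 2 * δ * t)
    (hηdec : ∀ u : X, ∀ t ∈ Set.Icc (0 : ℝ) 1, f (η u t) ≤ f u)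
    (hηkey : ∀ u ∈ γ '' Metric.closedBall (0 : EuclideanSpace ℝ (Fin N)) 1,
      c - ε ≤ f u → f u ≤ c + ε → f (η u 1) ≤ c - ε)
    (Ξ : X → ℝ) (hΞcont : Continuous Ξ) (hΞ01 : ∀ x, Ξ x ∈ Set.Icc (0 : ℝ) 1)
    (hΞ0 : ∀ x, f x ≤ a → Ξ x = 0) (hΞ1 : ∀ x, c - ε ≤ f x → Ξ x = 1) :
    False := by
  -- η u 0 = u
  have hη0 : ∀ u : X, η u 0 = u := by
    intro u
    simpa using hηdist u 0 ⟨le_refl 0, zero_le_one⟩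
  set γt : EuclideanSpace ℝ (Fin N) → X := fun τ => η (γ τ) (Ξ (γ τ)) with hγt
  have hγtcont : ContinuousOn γt (Metric.closedBall 0 1) := by
    have : γt = (fun p : X × ℝ => η p.1 p.2) ∘ (fun x => (x, Ξ x)) ∘ γ := rfl
    rw [this]
    exact (hηcont.comp (continuous_id.prodMk hΞcont)).comp_continuousOn hγcont
  obtain ⟨γ₀, hγ₀, hbd⟩ := hγmem
  have hbd' : ∀ τ ∈ Metric.sphere (0 : EuclideanSpace ℝ (Fin N)) 1, γt τ = γ₀ τ := by
    intro τ hτ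
    have hfa : f (γ τ) ≤ a := by rw [hbd τ hτ]; exact ha γ₀ hγ₀ τ hτ
    show η (γ τ) (Ξ (γ τ)) = γ₀ τ
    rw [hΞ0 _ hfa, hη0, hbd τ hτ]
  obtain ⟨τ, hτ, hcτ⟩ := hc γt hγtcont ⟨γ₀, hγ₀, hbd'⟩
  have hclt : ∀ σ ∈ Metric.closedBall (0 : EuclideanSpace ℝ (Fin N)) 1,
      f (γt σ) ≤ c - ε := by
    intro σ hσ
    by_cases h : c - ε ≤ f (γ σ)
    · have h1 : Ξ (γ σ) = 1 := hΞ1 _ h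
      have : γt σ = η (γ σ) 1 := by rw [hγt]; simp [h1]
      rw [this]
      exact hηkey _ ⟨σ, hσ, rfl⟩ h (hγsup σ hσ)
    · have := hηdec (γ σ) (Ξ (γ σ)) (hΞ01 _)
      linarith
  linarith [hclt τ hτ]
end
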